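/- arXiv:2007.10383 — 2 statements merged into one kernel-verified Lean document; each statement's English description precedes it below -/
import Mathlib

section
/- Let φ : R → S be an injective homomorphism of commutative rings of prime characteristic p > 0 such that φ is purely inseparable, i.e., for every s ∈ S there exists e ≥ 0 with s^{p^e} ∈ φ(R). Suppose S is reduced, S is F-solid, and there exists an R-linear map g : S → R such that g(1) is a nonzerodivisor of R. Then R is F-solid. -/
/-!
If `φ` is a nonzero `p⁻¹`-linear map on `S`, pick `s` with `t := φ s ≠ 0`. Some power
`t ^ p ^ e = r` lies in `R`, and `r ≠ 0` because `S` is reduced. Since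
`φ ((t ^ (p ^ e - 1)) ^ p * s) = t ^ p ^ e`, the map `x ↦ g (φ (c * x))` with
`c = (t ^ (p ^ e - 1)) ^ p * s` is `p⁻¹`-linear on `R` and sends `1` to `g r = r * g 1`,
which is nonzero as `g 1` is a nonzerodivisor.
-/

universe u v

def IsPInvLinear (p : ℕ) {S : Type*} [Semiring S] (φ : S →+ S) : Prop :=
  ∀ a x : S, φ (a ^ p * x) = a * φ x

namespace IsPInvLinear

variable {p : ℕ} {R S : Type*}

theorem exists_apply_eq_pow [CommSemiring S] {φ : S →+ S} (hφ : IsPInvLinear p φ) (s : S)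
    {n : ℕ} (hn : n ≠ 0) : ∃ c : S, φ c = φ s ^ n := by
  obtain ⟨k, rfl⟩ := Nat.exists_eq_succ_of_ne_zero hn
  exact ⟨(φ s ^ k) ^ p * s, by rw [hφ, pow_succ]⟩

variable [CommSemiring R] [CommSemiring S] [Algebra R S]

def descend (φ : S →+ S) (g : S →ₗ[R] R) (c : S) : R →+ R :=
  g.toAddMonoidHom.comp <| φ.comp <| (AddMonoidHom.mulLeft c).comp (algebraMap R S).toAddMonoidHom

@[simp]
theorem descend_apply (φ : S →+ S) (g : S →ₗ[R] R) (c : S) (x : R) :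
    descend φ g c x = g (φ (c * algebraMap R S x)) :=
  rfl

theorem descend_isPInvLinear {φ : S →+ S} (hφ : IsPInvLinear p φ) (g : S →ₗ[R] R) (c : S) :
    IsPInvLinear p (descend φ g c) := by
  intro a x
  have hmul : c * algebraMap R S (a ^ p * x) = algebraMap R S a ^ p * (c * algebraMap R S x) := by
    rw [map_mul, map_pow]
    ring
  rw [descend_apply, descend_apply, hmul, hφ, ← Algebra.smul_def, map_smul, smul_eq_mul]

end IsPInvLinear

theorem LinearMap.apply_algebraMap {R S : Type*} [CommSemiring R] [Semiring S] [Algebra R S]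
    (g : S →ₗ[R] R) (r : R) : g (algebraMap R S r) = r * g 1 := by
  rw [Algebra.algebraMap_eq_smul_one, map_smul, smul_eq_mul]

open IsPInvLinear in
theorem fsolid_descends_along_purely_inseparable_extension_general
    (p : ℕ) [Fact p.Prime]
    (R : Type u) (S : Type v) [CommRing R] [CommRing S]
    [Algebra R S]
    (hpinsep : ∀ s : S, ∃ e : ℕ, s ^ p ^ e ∈ Set.range (algebraMap R S))
    [IsReduced S]
    (hFsolidS : ∃ φ : S →+ S, (∀ a x : S, φ (a ^ p * x) = a * φ x) ∧ φ ≠ 0)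
    (g : S →ₗ[R] R) (hg : g 1 ∈ nonZeroDivisors R) :
    ∃ ψ : R →+ R, (∀ a x : R, ψ (a ^ p * x) = a * ψ x) ∧ ψ ≠ 0 := by
  obtain ⟨φ, hφ, hφne⟩ := hFsolidS
  obtain ⟨s, hs⟩ := DFunLike.ne_iff.mp hφne
  obtain ⟨e, r, hr⟩ := hpinsep (φ s)
  have hr0 : r ≠ 0 := by
    rintro rfl
    exact hs (IsNilpotent.eq_zero ⟨p ^ e, by rw [← hr, map_zero]⟩)
  obtain ⟨c, hc⟩ := exists_apply_eq_pow hφ s (pow_pos (Fact.out : p.Prime).pos e).ne'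
  refine ⟨descend φ g c, descend_isPInvLinear hφ g c, fun hψ => hr0 ?_⟩
  have hψ1 : descend φ g c 1 = r * g 1 := by
    rw [descend_apply, map_one, mul_one, hc, ← hr, LinearMap.apply_algebraMap]
  rw [hψ, AddMonoidHom.zero_apply, eq_comm] at hψ1
  exact (mul_right_mem_nonZeroDivisors_eq_zero_iff hg).mp hψ1

/-- **Descent of F-solidity along purely inseparable extensions.**
Let `R → S` be an injective, purely inseparable homomorphism of commutative rings of prime
characteristic `p` (for every `s ∈ S` some `p`-power `s ^ (p ^ e)` lies in the image of `R`).
If `S` is reduced and F-solid, and there is an `R`-linear map `g : S → R` with `g 1` a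
nonzerodivisor of `R`, then `R` is F-solid. -/
theorem fsolid_descends_along_purely_inseparable_extension
    (p : ℕ) [Fact p.Prime]
    (R : Type u) (S : Type v) [CommRing R] [CommRing S]
    [CharP R p] [CharP S p] [Algebra R S]
    (hinj : Function.Injective (algebraMap R S))
    (hpinsep : ∀ s : S, ∃ e : ℕ, s ^ p ^ e ∈ Set.range (algebraMap R S))
    [IsReduced S]
    (hFsolidS : ∃ φ : S →+ S, (∀ a x : S, φ (a ^ p * x) = a * φ x) ∧ φ ≠ 0)
    (g : S →ₗ[R] R) (hg : g 1 ∈ nonZeroDivisors R) :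
    ∃ ψ : R →+ R, (∀ a x : R, ψ (a ^ p * x) = a * ψ x) ∧ ψ ≠ 0 :=
  fsolid_descends_along_purely_inseparable_extension_general p R S hpinsep hFsolidS g hg
end

section
/- Let R be a Noetherian commutative ring and I a nonzero ideal of R such that R is I-adically separated (⋂_{n≥1} Iⁿ = 0) but R is not I-adically complete. Then the canonical map i : R → R̂^I to the I-adic completion does not split as a map of R-modules; that is, there is no R-linear map φ : R̂^I → R with φ ∘ i = id_R (equivalently, with φ(1) = 1). -/
universe u

/-! A splitting `φ` exhibits `R` as an `R`-linear retract of `R̂^I`, and `R̂^I` is `I`-adically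
complete because `I` is finitely generated. Linear maps preserve congruences modulo `Iⁿ • ⊤`, so
completeness passes to retracts, making the canonical map bijective. -/

section

variable {R M N : Type*} [CommRing R] [AddCommGroup M] [Module R M] [AddCommGroup N] [Module R N]
  {I : Ideal R}

theorem SModEq.map_pow_smul_top {n : ℕ} {x y : M} (f : M →ₗ[R] N)
    (h : x ≡ y [SMOD (I ^ n • ⊤ : Submodule R M)]) :
    f x ≡ f y [SMOD (I ^ n • ⊤ : Submodule R N)] :=
  (h.map f).mono <| by
    rw [Submodule.map_smul'']
    exact Submodule.smul_mono le_rfl le_top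

theorem IsHausdorff.of_injective [IsHausdorff I N] {f : M →ₗ[R] N}
    (hf : Function.Injective f) : IsHausdorff I M :=
  ⟨fun x hx ↦ hf <| by
    rw [map_zero]
    exact IsHausdorff.haus ‹_› (f x) fun n ↦ by simpa using (hx n).map_pow_smul_top f⟩

theorem IsPrecomplete.of_leftInverse [IsPrecomplete I N] {f : M →ₗ[R] N} {g : N →ₗ[R] M}
    (hgf : Function.LeftInverse g f) : IsPrecomplete I M := by
  refine ⟨fun x hx ↦ ?_⟩
  obtain ⟨L, hL⟩ := IsPrecomplete.prec ‹_› fun hmn ↦ (hx hmn).map_pow_smul_top f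
  exact ⟨g L, fun n ↦ hgf (x n) ▸ (hL n).map_pow_smul_top g⟩

theorem IsAdicComplete.of_leftInverse [IsAdicComplete I N] {f : M →ₗ[R] N} {g : N →ₗ[R] M}
    (hgf : Function.LeftInverse g f) : IsAdicComplete I M where
  toIsHausdorff := .of_injective hgf.injective
  toIsPrecomplete := .of_leftInverse hgf

end

theorem adicCompletion_canonical_map_does_not_split_general
    (R : Type u) [CommRing R] [IsNoetherianRing R] (I : Ideal R)
    (hnotcomplete : ¬ Function.Bijective (algebraMap R (AdicCompletion I R))) :
    ¬ ∃ φ : AdicCompletion I R →ₗ[R] R,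
        φ ∘ₗ Algebra.linearMap R (AdicCompletion I R) = LinearMap.id := by
  rintro ⟨φ, hφ⟩
  have hretract : Function.LeftInverse φ (AdicCompletion.of I R) := LinearMap.congr_fun hφ
  have : IsAdicComplete I (AdicCompletion I R) :=
    AdicCompletion.isAdicComplete I.fg_of_isNoetherianRing
  exact hnotcomplete (AdicCompletion.of_bijective_iff.mpr (.of_leftInverse hretract))

/-- **The canonical map to a nontrivial adic completion never splits.**
Let `R` be a Noetherian ring and `I` a nonzero ideal such that `R` is `I`-adically separated
(`⋂_{n ≥ 1} Iⁿ = 0`) but not `I`-adically complete (the canonical map `i : R → R̂^I` is not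
bijective).  Then there is no `R`-linear map `φ : R̂^I → R` with `φ ∘ i = id`. -/
theorem adicCompletion_canonical_map_does_not_split
    (R : Type u) [CommRing R] [IsNoetherianRing R] (I : Ideal R) (hI : I ≠ ⊥)
    (hsep : (⨅ n : ℕ, I ^ (n + 1)) = ⊥)
    (hnotcomplete : ¬ Function.Bijective (algebraMap R (AdicCompletion I R))) :
    ¬ ∃ φ : AdicCompletion I R →ₗ[R] R,
        φ ∘ₗ Algebra.linearMap R (AdicCompletion I R) = LinearMap.id :=
  adicCompletion_canonical_map_does_not_split_general R I hnotcomplete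
end
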